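/- Let X be a complex Banach space and Y a closed subspace of X which is an M-ideal in X. If there exists a contractive linear projection from Y** onto i_Y(Y), then Y is an M-summand in X, i.e., Y is the range of an M-projection on X. -/

import Mathlib

/-! Since `E` is a projection onto `Y^⊥`, `f - E f` depends only on the restriction `f|_Y`;
applied to norm-preserving Hahn–Banach extensions this yields a contractive *linear* extension
operator `σ : Y* → X*`. The map `x ↦ (g ↦ σ g x)` sends `X` contractively into `Y**` and
restricts to `i_Y` on `Y`, so the contractive projection onto `i_Y(Y)` turns it into a
contractive projection `R` of `X` onto `Y`. For `g ∈ ker E` the functional `g ∘ R` agrees with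
`g` on `Y` and has norm at most `‖g‖`, so the L-decomposition
`‖g ∘ R‖ = ‖E (g ∘ R)‖ + ‖g‖` forces `g ∘ R = g`. Hence `f ∘ R = f - E f` for all `f`, and
testing `x`, `R x` and `x - R x` against functionals shows that `R` is an M-projection. -/


open NormedSpace

/-- The topological dual of a seminormed space `E` (as `NormedSpace.Dual` was defined in Mathlib). -/
abbrev NormedSpace.Dual (𝕜 : Type*) [NontriviallyNormedField 𝕜] (E : Type*) [SeminormedAddCommGroup E]
    [NormedSpace 𝕜 E] : Type _ :=
  E →L[𝕜] 𝕜

noncomputable section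

set_option maxHeartbeats 1000000

/-- The transpose (dual map) of a continuous linear map between (semi)normed spaces:
`ctranspose f` sends a functional `g` to `g ∘ f`. -/
def ctranspose {E F : Type*} [SeminormedAddCommGroup E] [NormedSpace ℂ E]
    [SeminormedAddCommGroup F] [NormedSpace ℂ F] (f : E →L[ℂ] F) :
    Dual ℂ F →L[ℂ] Dual ℂ E :=
  (ContinuousLinearMap.compL ℂ E F ℂ).flip f

/-- A bounded linear projection `P` is an L-projection if `‖z‖ = ‖P z‖ + ‖z - P z‖`
for all `z`. -/
def IsLProjection {Z : Type*} [SeminormedAddCommGroup Z] [NormedSpace ℂ Z]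
    (P : Z →L[ℂ] Z) : Prop :=
  (∀ z, P (P z) = P z) ∧ ∀ z, ‖z‖ = ‖P z‖ + ‖z - P z‖

/-- A bounded linear projection `P` is an M-projection if `‖z‖ = max (‖P z‖, ‖z - P z‖)`
for all `z`. -/
def IsMProjection {Z : Type*} [SeminormedAddCommGroup Z] [NormedSpace ℂ Z]
    (P : Z →L[ℂ] Z) : Prop :=
  (∀ z, P (P z) = P z) ∧ ∀ z, ‖z‖ = max ‖P z‖ ‖z - P z‖

open ContinuousLinearMap

theorem LinearMap.exists_comp_eq_of_ker_le {R M M₂ M₃ : Type*} [Ring R] [AddCommGroup M]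
    [AddCommGroup M₂] [AddCommGroup M₃] [Module R M] [Module R M₂] [Module R M₃]
    (r : M →ₗ[R] M₂) (hr : Function.Surjective r) (T : M →ₗ[R] M₃)
    (h : LinearMap.ker r ≤ LinearMap.ker T) : ∃ S : M₂ →ₗ[R] M₃, S ∘ₗ r = T := by
  refine ⟨(LinearMap.ker r).liftQ T h ∘ₗ
    (r.quotKerEquivOfSurjective hr).symm.toLinearMap, ?_⟩
  ext x
  have : (r.quotKerEquivOfSurjective hr).symm (r x) = Submodule.Quotient.mk x :=
    (LinearEquiv.symm_apply_eq _).2 rfl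
  simp [this]

theorem LinearIsometry.exists_comp_eq_of_range_subset {𝕜 E F G : Type*}
    [NontriviallyNormedField 𝕜] [SeminormedAddCommGroup E] [NormedAddCommGroup F]
    [SeminormedAddCommGroup G] [NormedSpace 𝕜 E] [NormedSpace 𝕜 F] [NormedSpace 𝕜 G]
    (j : F →ₗᵢ[𝕜] G) (S : E →L[𝕜] G) (h : Set.range S ⊆ Set.range j) :
    ∃ T : E →L[𝕜] F, ‖T‖ ≤ ‖S‖ ∧ ∀ x, j (T x) = S x := by
  let e := LinearEquiv.ofInjective j.toLinearMap j.injective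
  let T : E →ₗ[𝕜] F :=
    e.symm ∘ₗ S.toLinearMap.codRestrict (LinearMap.range j.toLinearMap) fun x => h ⟨x, rfl⟩
  have hT : ∀ x, j (T x) = S x := fun x => congrArg Subtype.val (e.apply_symm_apply _)
  refine ⟨T.mkContinuous ‖S‖ fun x => ?_,
    LinearMap.mkContinuous_norm_le _ (norm_nonneg _) _, hT⟩
  rw [← j.norm_map, hT]
  exact S.le_opNorm x

section LProjection

variable {Z : Type*} [SeminormedAddCommGroup Z] [NormedSpace ℂ Z] {P : Z →L[ℂ] Z}

theorem IsLProjection.norm_apply_le (hP : IsLProjection P) (z : Z) : ‖P z‖ ≤ ‖z‖ := by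
  linarith [hP.2 z, norm_nonneg (z - P z)]

theorem IsLProjection.norm_sub_apply_le (hP : IsLProjection P) (z : Z) :
    ‖z - P z‖ ≤ ‖z‖ := by
  linarith [hP.2 z, norm_nonneg (P z)]

theorem IsLProjection.apply_sub_apply_eq_zero (hP : IsLProjection P) (z : Z) :
    P (z - P z) = 0 := by
  rw [map_sub, hP.1, sub_self]

end LProjection

theorem exists_retraction_of_extension_operator {X : Type*} [NormedAddCommGroup X]
    [NormedSpace ℂ X] {Y : Subspace ℂ X} {σ : Dual ℂ Y →L[ℂ] Dual ℂ X} (hσ : ‖σ‖ ≤ 1)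
    (hσY : ∀ (g : Dual ℂ Y) (y : Y), σ g y = g y)
    {Q : Dual ℂ (Dual ℂ Y) →L[ℂ] Dual ℂ (Dual ℂ Y)} (hQ : ‖Q‖ ≤ 1)
    (hQidem : ∀ Ψ, Q (Q Ψ) = Q Ψ)
    (hQrange : Set.range Q = Set.range (inclusionInDoubleDual ℂ Y)) :
    ∃ R₀ : X →L[ℂ] Y, ‖R₀‖ ≤ 1 ∧ ∀ y : Y, R₀ y = y := by
  have hrange : Set.range (Q.comp σ.flip) ⊆ Set.range (inclusionInDoubleDualLi ℂ (E := Y)) :=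
    fun _ ⟨x, hx⟩ => hQrange ▸ ⟨σ.flip x, hx⟩
  obtain ⟨R₀, hR₀, hR₀Q⟩ :=
    (inclusionInDoubleDualLi ℂ).exists_comp_eq_of_range_subset (Q.comp σ.flip) hrange
  refine ⟨R₀, hR₀.trans ?_, fun y => (inclusionInDoubleDualLi ℂ).injective ?_⟩
  · calc ‖Q.comp σ.flip‖ ≤ ‖Q‖ * ‖σ.flip‖ := opNorm_comp_le _ _
      _ ≤ 1 * 1 := by rw [opNorm_flip]; gcongr
      _ = 1 := one_mul 1
  · have hflip : σ.flip y = inclusionInDoubleDual ℂ Y y :=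
      ContinuousLinearMap.ext fun g => hσY g y
    obtain ⟨Ψ, hΨ⟩ : inclusionInDoubleDual ℂ Y y ∈ Set.range Q := hQrange ▸ ⟨y, rfl⟩
    rw [hR₀Q, comp_apply, hflip, ← hΨ, hQidem, hΨ]
    rfl

section MIdeal

variable {X : Type*} [NormedAddCommGroup X] [NormedSpace ℂ X] {Y : Subspace ℂ X}
  {E : Dual ℂ X →L[ℂ] Dual ℂ X} {R₀ : X →L[ℂ] Y}

theorem apply_eq_zero_of_range_eq_annihilator
    (hErange : Set.range E = {f : Dual ℂ X | ∀ y ∈ Y, f y = 0}) (f : Dual ℂ X) {y : X}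
    (hy : y ∈ Y) : E f y = 0 := by
  have hf : E f ∈ Set.range E := ⟨f, rfl⟩
  rw [hErange] at hf
  exact hf y hy

theorem sub_map_eq_of_comp_subtypeL_eq (hE : IsLProjection E)
    (hErange : Set.range E = {f : Dual ℂ X | ∀ y ∈ Y, f y = 0}) {f g : Dual ℂ X}
    (hfg : f.comp Y.subtypeL = g.comp Y.subtypeL) : f - E f = g - E g := by
  obtain ⟨h, hh⟩ : f - g ∈ Set.range E := by
    rw [hErange]
    intro y hy
    simpa [sub_eq_zero] using congr($hfg ⟨y, hy⟩)
  have hfix : E (f - g) = f - g := by rw [← hh, hE.1]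
  rw [map_sub] at hfix
  rw [sub_eq_sub_iff_sub_eq_sub]
  exact hfix.symm

theorem exists_extension_operator_of_isLProjection (hE : IsLProjection E)
    (hErange : Set.range E = {f : Dual ℂ X | ∀ y ∈ Y, f y = 0}) :
    ∃ σ : Dual ℂ Y →L[ℂ] Dual ℂ X, ‖σ‖ ≤ 1 ∧ ∀ (g : Dual ℂ Y) (y : Y), σ g y = g y := by
  let r : Dual ℂ X →ₗ[ℂ] Dual ℂ Y := (ctranspose Y.subtypeL).toLinearMap
  have hext : ∀ g : Dual ℂ Y, ∃ f : Dual ℂ X, f.comp Y.subtypeL = g ∧ ‖f‖ = ‖g‖ := fun g =>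
    let ⟨f, hf, hnorm⟩ := exists_extension_norm_eq Y g
    ⟨f, ContinuousLinearMap.ext hf, hnorm⟩
  have hr : Function.Surjective r := fun g => (hext g).imp fun _ => And.left
  obtain ⟨S, hS⟩ := r.exists_comp_eq_of_ker_le hr (LinearMap.id - E.toLinearMap) fun f hf => by
    simpa using sub_map_eq_of_comp_subtypeL_eq hE hErange (g := 0) hf
  have hSr : ∀ f, S (f.comp Y.subtypeL) = f - E f := fun f => LinearMap.congr_fun hS f
  refine ⟨S.mkContinuous 1 fun g => ?_, LinearMap.mkContinuous_norm_le _ zero_le_one _,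
    fun g y => ?_⟩ <;> obtain ⟨f, rfl, hnorm⟩ := hext g
  · rw [hSr, one_mul, ← hnorm]
    exact hE.norm_sub_apply_le f
  · simp [hSr, apply_eq_zero_of_range_eq_annihilator hErange f y.2]

theorem comp_subtypeL_comp_retraction_eq_sub (hE : IsLProjection E)
    (hErange : Set.range E = {f : Dual ℂ X | ∀ y ∈ Y, f y = 0}) (hR₀ : ‖R₀‖ ≤ 1)
    (hR₀Y : ∀ y : Y, R₀ y = y) (f : Dual ℂ X) :
    f.comp (Y.subtypeL.comp R₀) = f - E f := by
  set R := Y.subtypeL.comp R₀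
  have hRY : R.comp Y.subtypeL = Y.subtypeL := ContinuousLinearMap.ext fun y => by
    simp [R, hR₀Y]
  have hR : ‖R‖ ≤ 1 := (opNorm_comp_le _ _).trans <|
    mul_le_one₀ (Submodule.norm_subtypeL_le Y) (norm_nonneg _) hR₀
  have hfix : ∀ g, E g = 0 → g.comp R = g := by
    intro g hg
    have hsub : g.comp R - E (g.comp R) = g := by
      rw [sub_map_eq_of_comp_subtypeL_eq hE hErange (g := g) (by rw [comp_assoc, hRY]), hg,
        sub_zero]
    have hnorm : ‖g.comp R‖ ≤ ‖g‖ :=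
      (opNorm_comp_le _ _).trans (mul_le_of_le_one_right (norm_nonneg _) hR)
    have hE0 : E (g.comp R) = 0 := by
      have := hE.2 (g.comp R)
      rw [hsub] at this
      exact norm_le_zero_iff.1 (by linarith)
    rwa [hE0, sub_zero] at hsub
  have hEf : (E f).comp R = 0 := ContinuousLinearMap.ext fun x =>
    apply_eq_zero_of_range_eq_annihilator hErange f (R₀ x).2
  calc f.comp R = (f - E f).comp R + (E f).comp R := by rw [sub_comp, sub_add_cancel]
    _ = f - E f := by rw [hfix _ (hE.apply_sub_apply_eq_zero f), hEf, add_zero]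

theorem isMProjection_subtypeL_comp_retraction (hE : IsLProjection E)
    (hErange : Set.range E = {f : Dual ℂ X | ∀ y ∈ Y, f y = 0}) (hR₀ : ‖R₀‖ ≤ 1)
    (hR₀Y : ∀ y : Y, R₀ y = y) : IsMProjection (Y.subtypeL.comp R₀) := by
  set R := Y.subtypeL.comp R₀
  have hfR : ∀ (f : Dual ℂ X) x, f (R x) = f x - E f x := fun f x =>
    congr($(comp_subtypeL_comp_retraction_eq_sub hE hErange hR₀ hR₀Y f) x)
  have hRx : ∀ x, ‖R x‖ ≤ ‖x‖ := fun x =>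
    (R₀.le_opNorm x).trans (mul_le_of_le_one_left (norm_nonneg x) hR₀)
  refine ⟨fun x => congrArg Subtype.val (hR₀Y (R₀ x)), fun x => le_antisymm ?_ ?_⟩
  · refine norm_le_dual_bound ℂ x (le_max_of_le_left (norm_nonneg _)) fun f => ?_
    have hsplit : f x = (f - E f) (R x) + E f (x - R x) := by
      simp only [sub_apply, map_sub, hfR, hE.1]
      ring
    calc ‖f x‖ ≤ ‖f - E f‖ * ‖R x‖ + ‖E f‖ * ‖x - R x‖ := by
          rw [hsplit]
          exact (norm_add_le _ _).trans (add_le_add (le_opNorm _ _) (le_opNorm _ _))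
      _ ≤ ‖f - E f‖ * max ‖R x‖ ‖x - R x‖ + ‖E f‖ * max ‖R x‖ ‖x - R x‖ := by
          gcongr
          exacts [le_max_left _ _, le_max_right _ _]
      _ = max ‖R x‖ ‖x - R x‖ * ‖f‖ := by rw [hE.2 f]; ring
  · refine max_le (hRx x) (norm_le_dual_bound ℂ _ (norm_nonneg x) fun f => ?_)
    calc ‖f (x - R x)‖ = ‖E f x‖ := by rw [map_sub, hfR, sub_sub_cancel]
      _ ≤ ‖E f‖ * ‖x‖ := le_opNorm _ _
      _ ≤ ‖x‖ * ‖f‖ := by rw [mul_comm]; gcongr; exact hE.norm_apply_le f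

theorem range_subtypeL_comp_retraction (hR₀Y : ∀ y : Y, R₀ y = y) :
    Set.range (Y.subtypeL.comp R₀) = Y := by
  ext x
  exact ⟨fun ⟨z, hz⟩ => hz ▸ (R₀ z).2, fun hx => ⟨x, congrArg Subtype.val (hR₀Y ⟨x, hx⟩)⟩⟩

end MIdeal

theorem mIdeal_contractively_complemented_in_bidual_is_mSummand_general
    (X : Type*) [NormedAddCommGroup X] [NormedSpace ℂ X]
    (Y : Subspace ℂ X)
    (hMideal : ∃ P : Dual ℂ X →L[ℂ] Dual ℂ X, IsLProjection P ∧
      Set.range P = {f : Dual ℂ X | ∀ y ∈ Y, f y = 0})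
    (hproj : ∃ Q : Dual ℂ (Dual ℂ Y) →L[ℂ] Dual ℂ (Dual ℂ Y), ‖Q‖ ≤ 1 ∧
      (∀ Ψ, Q (Q Ψ) = Q Ψ) ∧
      Set.range Q = Set.range (inclusionInDoubleDual ℂ Y)) :
    ∃ R : X →L[ℂ] X, IsMProjection R ∧ Set.range R = (Y : Set X) := by
  obtain ⟨E, hE, hErange⟩ := hMideal
  obtain ⟨Q, hQ, hQidem, hQrange⟩ := hproj
  obtain ⟨σ, hσ, hσY⟩ := exists_extension_operator_of_isLProjection hE hErange
  obtain ⟨R₀, hR₀, hR₀Y⟩ := exists_retraction_of_extension_operator hσ hσY hQ hQidem hQrange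
  exact ⟨Y.subtypeL.comp R₀, isMProjection_subtypeL_comp_retraction hE hErange hR₀ hR₀Y,
    range_subtypeL_comp_retraction hR₀Y⟩

/-- If `Y` is an M-ideal in a complex Banach space `X` and there is a contractive
linear projection from `Y**` onto `i_Y(Y)`, then `Y` is an M-summand in `X`. -/
theorem mIdeal_contractively_complemented_in_bidual_is_mSummand
    (X : Type*) [NormedAddCommGroup X] [NormedSpace ℂ X] [CompleteSpace X]
    (Y : Subspace ℂ X) (hY : IsClosed (Y : Set X))
    (hMideal : ∃ P : Dual ℂ X →L[ℂ] Dual ℂ X, IsLProjection P ∧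
      Set.range P = {f : Dual ℂ X | ∀ y ∈ Y, f y = 0})
    (hproj : ∃ Q : Dual ℂ (Dual ℂ Y) →L[ℂ] Dual ℂ (Dual ℂ Y), ‖Q‖ ≤ 1 ∧
      (∀ Ψ, Q (Q Ψ) = Q Ψ) ∧
      Set.range Q = Set.range (inclusionInDoubleDual ℂ Y)) :
    ∃ R : X →L[ℂ] X, IsMProjection R ∧ Set.range R = (Y : Set X) :=
  mIdeal_contractively_complemented_in_bidual_is_mSummand_general X Y hMideal hproj
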